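/- Let X be a set and M a commutative family of transformations of X. Then every M-coherent preorder on X has an extension to a preorder on X that is strongly M-coherent. -/
import Mathlib


/-- The strict part of a binary relation: `x ≻ y` iff `x ≽ y` and not `y ≽ x`. -/
def StrictRel {X : Type*} (R : X → X → Prop) (x y : X) : Prop := R x y ∧ ¬ R y x

/-- `R` is `M`-coherent: every `ω ∈ M` preserves the weak and the strict relation. -/
def Coherent {X : Type*} (M : Set (X → X)) (R : X → X → Prop) : Prop :=
  ∀ ω ∈ M, ∀ x y : X, (R x y → R (ω x) (ω y)) ∧ (StrictRel R x y → StrictRel R (ω x) (ω y))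

/-- `R` is strongly `M`-coherent: coherent, and the converse implications also hold. -/
def StronglyCoherent {X : Type*} (M : Set (X → X)) (R : X → X → Prop) : Prop :=
  Coherent M R ∧
    ∀ ω ∈ M, ∀ x y : X, (R (ω x) (ω y) → R x y) ∧ (StrictRel R (ω x) (ω y) → StrictRel R x y)

/-- `R` is acyclic: there is no `k ≥ 2` and distinct `x₁, …, x_k` with
`x₁ ≽ x₂ ≽ … ≽ x_k` and `x_k ≻ x₁`.  (Indices here run from `0` to `k-1`.) -/
def Acyclic {X : Type*} (R : X → X → Prop) : Prop :=
  ¬ ∃ (k : ℕ) (x : ℕ → X), 2 ≤ k ∧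
      (∀ i j, i < k → j < k → x i = x j → i = j) ∧
      (∀ i, i + 1 < k → R (x i) (x (i + 1))) ∧
      StrictRel R (x (k - 1)) (x 0)

/-- `R'` is an extension of `R`. -/
def IsExtension {X : Type*} (R R' : X → X → Prop) : Prop :=
  (∀ x y, R x y → R' x y) ∧ (∀ x y, StrictRel R x y → StrictRel R' x y)

/-- A commutative family of transformations: nonempty, pairwise commuting, containing
the identity, and closed under composition. -/
def CommFamily {X : Type*} (M : Set (X → X)) : Prop :=
  M.Nonempty ∧ (∀ f ∈ M, ∀ g ∈ M, f ∘ g = g ∘ f) ∧ (id ∈ M) ∧ (∀ f ∈ M, ∀ g ∈ M, f ∘ g ∈ M)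


/-- **Lemma 2.** If `M` is a commutative family, then every `M`-coherent preorder has a
strongly `M`-coherent preorder extension. -/
theorem coherent_preorder_strongly_coherent_extension {X : Type*} (M : Set (X → X))
    (R : X → X → Prop) (hM : CommFamily M) (hrefl : Reflexive R) (htrans : Transitive R)
    (hcoh : Coherent M R) :
    ∃ R' : X → X → Prop, IsExtension R R' ∧ Reflexive R' ∧ Transitive R' ∧
      StronglyCoherent M R' := by
  obtain ⟨hne, hcomm, hid, hcomp⟩ := hM
  set R' : X → X → Prop := fun x y => ∃ ω ∈ M, R (ω x) (ω y) with hR'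
  have hext : IsExtension R R' := by
    constructor
    · exact fun x y h => ⟨id, hid, h⟩
    · rintro x y ⟨h1, h2⟩
      refine ⟨⟨id, hid, h1⟩, ?_⟩
      rintro ⟨ω, hω, hr⟩
      exact ((hcoh ω hω x y).2 ⟨h1, h2⟩).2 hr
  have hrefl' : Reflexive R' := fun x => ⟨id, hid, hrefl x⟩
  have htrans' : Transitive R' := by
    rintro x y z ⟨σ, hσ, h1⟩ ⟨τ, hτ, h2⟩
    refine ⟨τ ∘ σ, hcomp τ hτ σ hσ, ?_⟩
    have e1 : R (τ (σ x)) (τ (σ y)) := (hcoh τ hτ _ _).1 h1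
    have e2 : R (σ (τ y)) (σ (τ z)) := (hcoh σ hσ _ _).1 h2
    have hc := congrFun (hcomm σ hσ τ hτ)
    simp only [Function.comp_apply] at hc
    rw [hc y, hc z] at e2
    exact htrans e1 e2
  have hcohw : ∀ ω ∈ M, ∀ x y : X, R' x y → R' (ω x) (ω y) := by
    rintro ω hω x y ⟨σ, hσ, h⟩
    refine ⟨σ, hσ, ?_⟩
    have hc := congrFun (hcomm σ hσ ω hω)
    simp only [Function.comp_apply] at hc
    rw [hc x, hc y]
    exact (hcoh ω hω _ _).1 h
  have hconv : ∀ ω ∈ M, ∀ x y : X, R' (ω x) (ω y) → R' x y := by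
    rintro ω hω x y ⟨σ, hσ, h⟩
    exact ⟨σ ∘ ω, hcomp σ hσ ω hω, h⟩
  refine ⟨R', hext, hrefl', htrans', ⟨?_, ?_⟩⟩
  · intro ω hω x y
    refine ⟨hcohw ω hω x y, ?_⟩
    rintro ⟨h1, h2⟩
    exact ⟨hcohw ω hω x y h1, fun h3 => h2 (hconv ω hω y x h3)⟩
  · intro ω hω x y
    refine ⟨hconv ω hω x y, ?_⟩
    rintro ⟨h1, h2⟩
    exact ⟨hconv ω hω x y h1, fun h3 => h2 (hcohw ω hω y x h3)⟩
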